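/- Let {ℙ_n}_{n≥0} be the monic OPS of a quasi-definite moment functional u on Π^d, satisfying the three term relations x_i ℙ_n = L_{n,i} ℙ_{n+1} + B_{n,i} ℙ_n + C_{n,i} ℙ_{n−1}. Let {M_n}_{n≥1} and {N_n}_{n≥2} be matrices of sizes r_n^d × r_{n−1}^d and r_n^d × r_{n−2}^d with N_2 ≠ 0, and define recursively ℚ_0 = ℙ_0, ℚ_1 = ℙ_1 − M_1 ℙ_0, and ℚ_n = ℙ_n − M_n ℚ_{n−1} − N_n ℚ_{n−2} for n ≥ 2. Then {ℚ_n} satisfies three term relations x_i ℚ_n = L_{n,i} ℚ_{n+1} + B̂_{n,i} ℚ_n + Ĉ_{n,i} ℚ_{n−1} (1 ≤ i ≤ d, with ℚ_{−1} = 0, Ĉ_{−1,i} = 0) if and only if for all n and 1 ≤ i ≤ d: B̂_{n,i} = B_{n,i} − M_n L_{n−1,i} + L_{n,i} M_{n+1}; Ĉ_{n,i} = C_{n,i} − M_n B̂_{n−1,i} + B_{n,i} M_n − N_n L_{n−2,i} + L_{n,i} N_{n+1}; M_n Ĉ_{n−1,i} + N_n B̂_{n−2,i} = C_{n,i} M_{n−1}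 + B_{n,i} N_n; and C_{n,i} N_{n−1} = N_n Ĉ_{n−2,i}. In that case {ℚ_n} is the monic OPS of a quasi-definite moment functional v, and v = λ(x)u where λ(x) = N_2^t H_2^{−1} ℙ_2 + M_1^t H_1^{−1} ℙ_1 + H_0^{−1} ℙ_0 is a polynomial of exact total degree 2. -/

import Mathlib

open MvPolynomial Matrix

/-- The index set for monomials of total degree `n` in `d` variables:
multi-indices (exponent tuples) summing to `n`. Its cardinality is `r_n^d = C(n+d-1,n)`. -/
abbrev Idx (d n : ℕ) : Type := {ν : Fin d → ℕ // ν ∈ Finset.Nat.antidiagonalTuple d n}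

/-- The monomial `x^ν` associated with a multi-index `ν` of total degree `n`;
the family `fun α : Idx d n => monIdx α` is the canonical vector `𝕏_n`. -/
noncomputable def monIdx {d n : ℕ} (α : Idx d n) : MvPolynomial (Fin d) ℝ :=
  MvPolynomial.monomial (Finsupp.equivFunOnFinite.symm α.1) 1

/-- A polynomial system (PS): a sequence of vectors `ℙ_n` of size `r_n^d` whose
entries are polynomials of total degree `n`, the entries of `ℙ_0,…,ℙ_n` forming a
basis of the polynomials of total degree at most `n`. -/
structure PolySystem (d : ℕ) where
  vec : (n : ℕ) → Idx d n → MvPolynomial (Fin d) ℝ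
  degree_eq : ∀ n α, (vec n α).totalDegree = n
  indep : LinearIndependent ℝ (fun p : (Σ n : ℕ, Idx d n) => vec p.1 p.2)
  spans : ∀ (n : ℕ) (p : MvPolynomial (Fin d) ℝ), p.totalDegree ≤ n →
    p ∈ Submodule.span ℝ {q | ∃ m ≤ n, ∃ α : Idx d m, q = vec m α}

/-- `{ℙ_n}` is an orthogonal polynomial system (OPS) with respect to the moment
functional `u` : `⟨u, 𝕏_m ℙ_n^t⟩ = 0` for `m < n` and `⟨u, 𝕏_n ℙ_n^t⟩` nonsingular. -/
def IsOPS {d : ℕ} (u : MvPolynomial (Fin d) ℝ →ₗ[ℝ] ℝ) (P : PolySystem d) : Prop :=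
  (∀ m n : ℕ, m < n → ∀ (α : Idx d m) (β : Idx d n), u (monIdx α * P.vec n β) = 0) ∧
  (∀ n : ℕ, IsUnit (Matrix.of fun α β : Idx d n => u (monIdx α * P.vec n β)).det)

/-- `u` is quasi-definite iff it admits an OPS. -/
def QuasiDefinite {d : ℕ} (u : MvPolynomial (Fin d) ℝ →ₗ[ℝ] ℝ) : Prop :=
  ∃ P : PolySystem d, IsOPS u P

/-- `H_n = ⟨u, ℙ_n ℙ_n^t⟩`. -/
noncomputable def Hmat {d : ℕ} (u : MvPolynomial (Fin d) ℝ →ₗ[ℝ] ℝ) (P : PolySystem d)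
    (n : ℕ) : Matrix (Idx d n) (Idx d n) ℝ :=
  Matrix.of fun α β => u (P.vec n α * P.vec n β)

/-- `P_m(u;x,y) = ℙ_m(x)^t H_m⁻¹ ℙ_m(y)`. -/
noncomputable def kerP {d : ℕ} (u : MvPolynomial (Fin d) ℝ →ₗ[ℝ] ℝ) (P : PolySystem d)
    (m : ℕ) (x y : Fin d → ℝ) : ℝ :=
  ∑ α, ∑ β, eval x (P.vec m α) * (Hmat u P m)⁻¹ α β * eval y (P.vec m β)

/-- `kerLT u P n = K_{n-1}(u;·,·) = Σ_{m<n} P_m(u;·,·)`, so that `kerLT u P 0 = K_{-1} = 0`. -/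
noncomputable def kerLT {d : ℕ} (u : MvPolynomial (Fin d) ℝ →ₗ[ℝ] ℝ) (P : PolySystem d)
    (n : ℕ) (x y : Fin d → ℝ) : ℝ :=
  ∑ m ∈ Finset.range n, kerP u P m x y

/-- `𝖯_n(ξ) = (ℙ_n(ξ_1)|⋯|ℙ_n(ξ_N))`. -/
noncomputable def Pmat {d N : ℕ} (P : PolySystem d) (ξ : Fin N → (Fin d → ℝ)) (n : ℕ) :
    Matrix (Idx d n) (Fin N) ℝ :=
  Matrix.of fun α i => eval (ξ i) (P.vec n α)

/-- `Kmat u P ξ n = 𝒦_{n-1} = (K_{n-1}(u;ξ_i,ξ_j))_{i,j}`, with `𝒦_{-1} = 0`. -/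
noncomputable def Kmat {d N : ℕ} (u : MvPolynomial (Fin d) ℝ →ₗ[ℝ] ℝ) (P : PolySystem d)
    (ξ : Fin N → (Fin d → ℝ)) (n : ℕ) : Matrix (Fin N) (Fin N) ℝ :=
  Matrix.of fun i j => kerLT u P n (ξ i) (ξ j)

/-- `Kvec u P ξ n x = 𝖪_{n-1}(ξ,x) = (K_{n-1}(u;ξ_1,x),…,K_{n-1}(u;ξ_N,x))^t`, with `𝖪_{-1}=0`. -/
noncomputable def Kvec {d N : ℕ} (u : MvPolynomial (Fin d) ℝ →ₗ[ℝ] ℝ) (P : PolySystem d)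
    (ξ : Fin N → (Fin d → ℝ)) (n : ℕ) (x : Fin d → ℝ) : Fin N → ℝ :=
  fun i => kerLT u P n (ξ i) x

/-- A PS is monic if the degree-`n` homogeneous part of the entry of `ℙ_n` indexed
by `α` is exactly the monomial `x^α`. -/
def PolySystem.IsMonic {d : ℕ} (P : PolySystem d) : Prop :=
  ∀ (n : ℕ) (α : Idx d n) (ν : Fin d →₀ ℕ), (ν.sum fun _ e => e) = n →
    MvPolynomial.coeff ν (P.vec n α) = if ν = Finsupp.equivFunOnFinite.symm α.1 then 1 else 0

/-- Multiplication of a real matrix times a vector of polynomials. -/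
noncomputable def matVec {d : ℕ} {a b : Type} [Fintype b] (M : Matrix a b ℝ)
    (w : b → MvPolynomial (Fin d) ℝ) (i : a) : MvPolynomial (Fin d) ℝ :=
  ∑ j, M i j • w j

/-- The matrix `L_{n,i}` determined by `x_i 𝕏_n = L_{n,i} 𝕏_{n+1}`. -/
noncomputable def Lmat (d n : ℕ) (i : Fin d) : Matrix (Idx d n) (Idx d (n + 1)) ℝ :=
  Matrix.of fun α β => if β.1 = (fun j => α.1 j + if j = i then 1 else 0) then 1 else 0

/-- The unique multi-index of degree 0. -/
def zeroIdx {d : ℕ} : Idx d 0 :=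
  ⟨fun _ => 0, by simp [Finset.Nat.mem_antidiagonalTuple]⟩

/-- The degree-2 multi-index `e_i + e_j`. -/
def e2 {d : ℕ} (i j : Fin d) : Idx d 2 :=
  ⟨fun k => (if k = i then 1 else 0) + (if k = j then 1 else 0), by
    simp [Finset.Nat.mem_antidiagonalTuple, Finset.sum_add_distrib]⟩

/-- `A_{h,2} = Σ_{1≤i≤j≤d} a^{(2)}_{ij} L_{h,j} L_{h+1,i}`. -/
noncomputable def Amat2 {d : ℕ} (a2 : Idx d 2 → ℝ) (h : ℕ) :
    Matrix (Idx d h) (Idx d (h + 2)) ℝ :=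
  ∑ i : Fin d, ∑ j : Fin d,
    if i ≤ j then a2 (e2 i j) • (Lmat d h j * Lmat d (h + 1) i) else 0

/-- The polynomial `λ(x) = a_2·𝕏_2 + a_1·𝕏_1 + a_0`. -/
noncomputable def lamPoly {d : ℕ} (a2 : Idx d 2 → ℝ) (a1 : Idx d 1 → ℝ) (a0 : ℝ) :
    MvPolynomial (Fin d) ℝ :=
  (∑ α : Idx d 2, a2 α • monIdx α) + (∑ α : Idx d 1, a1 α • monIdx α) + MvPolynomial.C a0

/-!
Substituting `ℙ_k = ℚ_k + M_k ℚ_{k-1} + N_k ℚ_{k-2}` into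
`x_i ℚ_n = x_i ℙ_n - M_n x_i ℚ_{n-1} - N_n x_i ℚ_{n-2}` and using the three term relations of
`ℙ` and (inductively) of `ℚ` writes `x_i ℚ_n` as `L_{n,i} ℚ_{n+1}` plus a combination of
`ℚ_n, …, ℚ_{n-3}`. The `ℚ_k` are monic, so such expansions are unique: the three term relation
for `ℚ` holds exactly when the coefficients agree, and these agreements are the compatibility
equations.

For the functional, `λ` is built so that `⟨λu, ℙ_0⟩ = 1`, `⟨λu, ℙ_1⟩ = M_1`, `⟨λu, ℙ_2⟩ = N_2`
and `⟨λu, ℙ_k⟩ = 0` for `k ≥ 3`; the recursion then gives `⟨λu, ℚ_n⟩ = 0` for `n ≥ 1`, and the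
three term relation of `ℚ` moves any monomial of degree `< n` across `ℚ_n`, which is
orthogonality. The Gram matrices are nonsingular because `λu` is nondegenerate: `u` is, and
`λ ≠ 0` since its top coefficients `N_2^t H_2⁻¹` do not vanish.
-/

section

variable {d : ℕ}

section Idx

noncomputable def Idx.toFinsupp {n : ℕ} (α : Idx d n) : Fin d →₀ ℕ :=
  Finsupp.equivFunOnFinite.symm α.1

lemma Idx.sum_toFinsupp {n : ℕ} (α : Idx d n) : (α.toFinsupp.sum fun _ e => e) = n := by
  have h := α.2
  rw [Finset.Nat.mem_antidiagonalTuple] at h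
  rwa [Finsupp.sum_fintype _ _ fun _ => rfl]

lemma monIdx_eq_monomial {n : ℕ} (α : Idx d n) : monIdx α = monomial α.toFinsupp 1 := rfl

noncomputable def Idx.ofFinsupp (ν : Fin d →₀ ℕ) : Idx d (ν.sum fun _ e => e) :=
  ⟨Finsupp.equivFunOnFinite ν, by
    rw [Finset.Nat.mem_antidiagonalTuple, Finsupp.sum_fintype _ _ fun _ => rfl]; rfl⟩

@[simp]
lemma Idx.toFinsupp_ofFinsupp (ν : Fin d →₀ ℕ) : (Idx.ofFinsupp ν).toFinsupp = ν := by
  simp [Idx.toFinsupp, Idx.ofFinsupp]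

lemma Idx.toFinsupp_injective {n : ℕ} : Function.Injective (Idx.toFinsupp : Idx d n → _) :=
  fun _ _ h => Subtype.ext (Finsupp.equivFunOnFinite.symm.injective h)

lemma Idx.sigma_eq_of_toFinsupp_eq {m n : ℕ} {α : Idx d m} {β : Idx d n}
    (h : α.toFinsupp = β.toFinsupp) : (⟨m, α⟩ : Σ k, Idx d k) = ⟨n, β⟩ := by
  obtain rfl : m = n := by rw [← α.sum_toFinsupp, ← β.sum_toFinsupp, h]
  exact Sigma.ext rfl (heq_of_eq (Idx.toFinsupp_injective h))

instance : Unique (Idx d 0) where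
  default := zeroIdx
  uniq β := Subtype.ext <| funext fun j => by
    have h := β.2
    rw [Finset.Nat.mem_antidiagonalTuple, Finset.sum_eq_zero_iff] at h
    exact h j (Finset.mem_univ j)

@[simp]
lemma Idx.default_eq_zeroIdx : (default : Idx d 0) = zeroIdx := rfl

end Idx

section TotalDegreeLT

noncomputable def totalDegreeLT (d n : ℕ) : Submodule ℝ (MvPolynomial (Fin d) ℝ) :=
  restrictSupport ℝ {ν | (ν.sum fun _ e => e) < n}

lemma mem_totalDegreeLT_iff_coeff {n : ℕ} {p : MvPolynomial (Fin d) ℝ} :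
    p ∈ totalDegreeLT d n ↔ ∀ ν, n ≤ (ν.sum fun _ e => e) → coeff ν p = 0 := by
  simp only [totalDegreeLT, mem_restrictSupport_iff, Set.subset_def, Finset.mem_coe,
    mem_support_iff, Set.mem_ofPred_eq]
  exact forall_congr' fun ν => by rw [← not_imp_not, not_lt, not_not]

lemma coeff_eq_zero_of_mem_totalDegreeLT {n : ℕ} {p : MvPolynomial (Fin d) ℝ}
    (hp : p ∈ totalDegreeLT d n) {ν : Fin d →₀ ℕ} (hν : n ≤ ν.sum fun _ e => e) :
    coeff ν p = 0 :=
  mem_totalDegreeLT_iff_coeff.mp hp ν hν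

lemma mem_totalDegreeLT_of_totalDegree_lt {n : ℕ} {p : MvPolynomial (Fin d) ℝ}
    (hp : p.totalDegree < n) : p ∈ totalDegreeLT d n :=
  fun _ hν => (le_totalDegree hν).trans_lt hp

lemma mem_totalDegreeLT_succ_iff {n : ℕ} {p : MvPolynomial (Fin d) ℝ} :
    p ∈ totalDegreeLT d (n + 1) ↔ p.totalDegree ≤ n := by
  rw [← mem_restrictTotalDegree]
  simp only [totalDegreeLT, restrictTotalDegree, Nat.lt_succ_iff]

lemma totalDegreeLT_mono {m n : ℕ} (h : m ≤ n) : totalDegreeLT d m ≤ totalDegreeLT d n :=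
  restrictSupport_mono ℝ fun _ hν => lt_of_lt_of_le hν h

lemma eq_zero_of_mem_totalDegreeLT_totalDegree {p : MvPolynomial (Fin d) ℝ}
    (hp : p ∈ totalDegreeLT d p.totalDegree) : p = 0 := by
  by_contra h
  obtain ⟨ν, hν, hsup⟩ := Finset.exists_mem_eq_sup p.support (support_nonempty.mpr h)
    fun ν => ν.sum fun _ e => e
  exact (mem_support_iff.mp hν) (coeff_eq_zero_of_mem_totalDegreeLT hp hsup.le)

lemma map_mul_eq_zero_of_mem_totalDegreeLT (T : MvPolynomial (Fin d) ℝ →ₗ[ℝ] ℝ)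
    {n : ℕ} {p q : MvPolynomial (Fin d) ℝ}
    (h : ∀ ν : Fin d →₀ ℕ, (ν.sum fun _ e => e) < n → T (monomial ν 1 * q) = 0)
    (hp : p ∈ totalDegreeLT d n) : T (p * q) = 0 := by
  rw [totalDegreeLT, restrictSupport_eq_span] at hp
  induction hp using Submodule.span_induction with
  | mem _ hx => obtain ⟨ν, hν, rfl⟩ := hx; exact h ν hν
  | zero => simp
  | add _ _ _ _ hx hy => simp [add_mul, hx, hy]
  | smul _ _ _ hx => simp [hx]

end TotalDegreeLT

section MatVec

variable {ι κ μ : Type} [Fintype κ] [Fintype μ]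

lemma matVec_add (A : Matrix ι κ ℝ) (w w' : κ → MvPolynomial (Fin d) ℝ) :
    matVec A (w + w') = matVec A w + matVec A w' := by
  funext i; simp [matVec, smul_add, Finset.sum_add_distrib]

lemma matVec_sub (A : Matrix ι κ ℝ) (w w' : κ → MvPolynomial (Fin d) ℝ) :
    matVec A (w - w') = matVec A w - matVec A w' := by
  funext i; simp [matVec, smul_sub, Finset.sum_sub_distrib]

lemma add_matVec (A B : Matrix ι κ ℝ) (w : κ → MvPolynomial (Fin d) ℝ) :
    matVec (A + B) w = matVec A w + matVec B w := by
  funext i; simp [matVec, add_smul, Finset.sum_add_distrib]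

lemma sub_matVec (A B : Matrix ι κ ℝ) (w : κ → MvPolynomial (Fin d) ℝ) :
    matVec (A - B) w = matVec A w - matVec B w := by
  funext i; simp [matVec, sub_smul, Finset.sum_sub_distrib]

@[simp]
lemma zero_matVec (w : κ → MvPolynomial (Fin d) ℝ) : matVec (0 : Matrix ι κ ℝ) w = 0 := by
  funext i; simp [matVec]

lemma matVec_matVec (A : Matrix ι κ ℝ) (B : Matrix κ μ ℝ) (w : μ → MvPolynomial (Fin d) ℝ) :
    matVec A (matVec B w) = matVec (A * B) w := by
  funext i
  simp only [matVec, Finset.smul_sum, smul_smul, Matrix.mul_apply, Finset.sum_smul]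
  exact Finset.sum_comm

lemma smul_matVec (p : MvPolynomial (Fin d) ℝ) (A : Matrix ι κ ℝ)
    (w : κ → MvPolynomial (Fin d) ℝ) : p • matVec A w = matVec A (p • w) := by
  funext i; simp [matVec, Finset.mul_sum]

lemma map_matVec (T : MvPolynomial (Fin d) ℝ →ₗ[ℝ] ℝ) (A : Matrix ι κ ℝ)
    (w : κ → MvPolynomial (Fin d) ℝ) (i : ι) : T (matVec A w i) = ∑ j, A i j * T (w j) := by
  simp [matVec]

lemma matVec_mem {S : Submodule ℝ (MvPolynomial (Fin d) ℝ)} (A : Matrix ι κ ℝ)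
    {w : κ → MvPolynomial (Fin d) ℝ} (hw : ∀ j, w j ∈ S) (i : ι) : matVec A w i ∈ S :=
  S.sum_mem fun j _ => S.smul_mem _ (hw j)

end MatVec

section IsMonicVec

def IsMonicVec (n : ℕ) (w : Idx d n → MvPolynomial (Fin d) ℝ) : Prop :=
  ∀ α, w α - monIdx α ∈ totalDegreeLT d n

lemma coeff_monIdx {n : ℕ} (α : Idx d n) (ν : Fin d →₀ ℕ) :
    coeff ν (monIdx α) = if ν = α.toFinsupp then 1 else 0 := by
  simp [monIdx_eq_monomial, coeff_monomial, eq_comm]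

lemma isMonicVec_monIdx (n : ℕ) : IsMonicVec n (monIdx (d := d)) := by
  simp [IsMonicVec]

namespace IsMonicVec

variable {n : ℕ} {w : Idx d n → MvPolynomial (Fin d) ℝ}

lemma coeff_eq (hw : IsMonicVec n w) (α : Idx d n) {ν : Fin d →₀ ℕ}
    (hν : n ≤ ν.sum fun _ e => e) : coeff ν (w α) = if ν = α.toFinsupp then 1 else 0 := by
  have h := coeff_eq_zero_of_mem_totalDegreeLT (hw α) hν
  rwa [coeff_sub, coeff_monIdx, sub_eq_zero] at h

lemma mem_totalDegreeLT_succ (hw : IsMonicVec n w) (α : Idx d n) :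
    w α ∈ totalDegreeLT d (n + 1) := by
  rw [← sub_add_cancel (w α) (monIdx α)]
  refine add_mem (totalDegreeLT_mono n.le_succ (hw α)) ?_
  rw [mem_totalDegreeLT_succ_iff, monIdx_eq_monomial, totalDegree_monomial _ one_ne_zero,
    α.sum_toFinsupp]

lemma totalDegree_eq (hw : IsMonicVec n w) (α : Idx d n) : (w α).totalDegree = n := by
  refine le_antisymm (mem_totalDegreeLT_succ_iff.mp (hw.mem_totalDegreeLT_succ α)) ?_
  have hmem : α.toFinsupp ∈ (w α).support := by
    rw [mem_support_iff, hw.coeff_eq α α.sum_toFinsupp.ge, if_pos rfl]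
    exact one_ne_zero
  simpa [α.sum_toFinsupp] using le_totalDegree hmem

lemma coeff_sum_smul (hw : IsMonicVec n w) (c : Idx d n → ℝ) (β : Idx d n) :
    coeff β.toFinsupp (∑ γ, c γ • w γ) = c β := by
  simp only [coeff_sum, coeff_smul, hw.coeff_eq _ β.sum_toFinsupp.ge,
    Idx.toFinsupp_injective.eq_iff, smul_eq_mul, mul_ite, mul_one, mul_zero,
    Finset.sum_ite_eq, Finset.mem_univ, if_true]

lemma coeff_matVec_add (hw : IsMonicVec n w) {ι : Type} (A : Matrix ι (Idx d n) ℝ)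
    {r : MvPolynomial (Fin d) ℝ} (hr : r ∈ totalDegreeLT d n) (i : ι) (β : Idx d n) :
    coeff β.toFinsupp (matVec A w i + r) = A i β := by
  rw [coeff_add, matVec, hw.coeff_sum_smul,
    coeff_eq_zero_of_mem_totalDegreeLT hr β.sum_toFinsupp.ge, add_zero]

lemma matVec_add_eq_zero_iff (hw : IsMonicVec n w) {ι : Type} (A : Matrix ι (Idx d n) ℝ)
    {r : ι → MvPolynomial (Fin d) ℝ} (hr : ∀ i, r i ∈ totalDegreeLT d n) :
    matVec A w + r = 0 ↔ A = 0 ∧ r = 0 := by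
  refine ⟨fun h => ?_, fun ⟨hA, hr⟩ => by simp [hA, hr]⟩
  have hA : A = 0 := by
    ext i β
    rw [← hw.coeff_matVec_add A (hr i), ← Pi.add_apply, h]
    simp
  exact ⟨hA, by simpa [hA] using h⟩

lemma matVec_mem_totalDegreeLT {k : ℕ} {v : Idx d k → MvPolynomial (Fin d) ℝ}
    (hv : IsMonicVec k v) (h : k < n) {ι : Type} (A : Matrix ι (Idx d k) ℝ) (i : ι) :
    matVec A v i ∈ totalDegreeLT d n :=
  matVec_mem A (fun j => totalDegreeLT_mono h (hv.mem_totalDegreeLT_succ j)) i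

lemma matVec_eq_zero_iff (hw : IsMonicVec n w) {ι : Type} (A : Matrix ι (Idx d n) ℝ) :
    matVec A w = 0 ↔ A = 0 := by
  simpa using hw.matVec_add_eq_zero_iff A (r := 0) fun _ => zero_mem _

lemma sub_sum_coeff_smul_mem (hw : IsMonicVec n w) {p : MvPolynomial (Fin d) ℝ}
    (hp : p ∈ totalDegreeLT d (n + 1)) :
    p - ∑ β, coeff β.toFinsupp p • w β ∈ totalDegreeLT d n := by
  rw [mem_totalDegreeLT_iff_coeff]
  intro ν hν
  rcases hν.lt_or_eq with hlt | rfl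
  · rw [coeff_sub, coeff_eq_zero_of_mem_totalDegreeLT hp hlt, coeff_eq_zero_of_mem_totalDegreeLT
      (Submodule.sum_mem _ fun β _ => Submodule.smul_mem _ _ (hw.mem_totalDegreeLT_succ β)) hlt,
      sub_zero]
  · have h := hw.coeff_sum_smul (fun β => coeff β.toFinsupp p) (Idx.ofFinsupp ν)
    rw [Idx.toFinsupp_ofFinsupp] at h
    rw [coeff_sub, h, sub_self]

end IsMonicVec

lemma PolySystem.IsMonic.isMonicVec {P : PolySystem d} (hP : P.IsMonic) (n : ℕ) :
    IsMonicVec n (P.vec n) := by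
  intro α
  rw [mem_totalDegreeLT_iff_coeff]
  intro ν hν
  rcases hν.lt_or_eq with hlt | heq
  · rw [coeff_sub, coeff_eq_zero_of_totalDegree_lt (by rw [P.degree_eq]; exact hlt),
      coeff_eq_zero_of_totalDegree_lt (by rwa [monIdx_eq_monomial,
        totalDegree_monomial _ one_ne_zero, α.sum_toFinsupp]), sub_zero]
  · rw [coeff_sub, hP n α ν heq.symm, coeff_monIdx, Idx.toFinsupp, sub_self]

end IsMonicVec

section MonicFamily

variable {w : (n : ℕ) → Idx d n → MvPolynomial (Fin d) ℝ}

/-- Take a term `⟨K, β⟩` of top degree `K` among those with nonzero coefficient: the coefficient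
of `x^β` sees only that term, as lower terms lack the monomial and the other monic terms of degree
`K` have different leading monomials. -/
lemma linearIndependent_of_isMonicVec (hw : ∀ n, IsMonicVec n (w n)) :
    LinearIndependent ℝ (fun p : Σ n, Idx d n => w p.1 p.2) := by
  rw [linearIndependent_iff']
  intro s g hsum p₀ hp₀s
  by_contra hp₀
  set t := s.filter fun p => g p ≠ 0
  obtain ⟨⟨K, β⟩, hβt, hmax⟩ :=
    t.exists_max_image (fun p => p.1) ⟨p₀, Finset.mem_filter.mpr ⟨hp₀s, hp₀⟩⟩
  have hsum_t : ∑ p ∈ t, g p • w p.1 p.2 = 0 := by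
    rwa [Finset.sum_filter_of_ne (p := fun p => g p ≠ 0) fun p _ h hg => h (by rw [hg, zero_smul])]
  have hcoeff := congrArg (coeff β.toFinsupp) hsum_t
  rw [coeff_sum, Finset.sum_eq_single_of_mem _ hβt, coeff_smul,
    (hw K).coeff_eq β β.sum_toFinsupp.ge, if_pos rfl, smul_eq_mul, mul_one,
    coeff_zero] at hcoeff
  · exact (Finset.mem_filter.mp hβt).2 hcoeff
  · rintro ⟨k, γ⟩ hγt hne
    rw [coeff_smul, (hw k).coeff_eq γ (β.sum_toFinsupp.symm ▸ hmax _ hγt),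
      if_neg fun h => hne (Idx.sigma_eq_of_toFinsupp_eq h).symm, smul_zero]

lemma mem_span_of_isMonicVec (hw : ∀ n, IsMonicVec n (w n)) :
    ∀ n, ∀ p ∈ totalDegreeLT d n,
      p ∈ Submodule.span ℝ {q | ∃ m < n, ∃ α : Idx d m, q = w m α}
  | 0, p, hp => by
    have : p = 0 := by
      ext ν
      exact coeff_eq_zero_of_mem_totalDegreeLT hp (Nat.zero_le _)
    simp [this]
  | n + 1, p, hp => by
    rw [← sub_add_cancel p (∑ β, coeff β.toFinsupp p • w n β)]
    refine add_mem ?_ (Submodule.sum_mem _ fun β _ => Submodule.smul_mem _ _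
      (Submodule.subset_span ⟨n, n.lt_succ_self, β, rfl⟩))
    refine Submodule.span_mono ?_
      (mem_span_of_isMonicVec hw n _ ((hw n).sub_sum_coeff_smul_mem hp))
    rintro q ⟨m, hm, α, rfl⟩
    exact ⟨m, hm.trans n.lt_succ_self, α, rfl⟩

noncomputable def PolySystem.ofMonic (w : (n : ℕ) → Idx d n → MvPolynomial (Fin d) ℝ)
    (hw : ∀ n, IsMonicVec n (w n)) : PolySystem d where
  vec := w
  degree_eq n := (hw n).totalDegree_eq
  indep := linearIndependent_of_isMonicVec hw
  spans n p hp := by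
    simpa only [Nat.lt_succ_iff] using
      mem_span_of_isMonicVec hw (n + 1) p (mem_totalDegreeLT_succ_iff.mpr hp)

lemma PolySystem.isMonic_ofMonic (hw : ∀ n, IsMonicVec n (w n)) :
    (PolySystem.ofMonic w hw).IsMonic :=
  fun n α _ hν => (hw n).coeff_eq α hν.ge

end MonicFamily

structure HasThreeTerm (w : (n : ℕ) → Idx d n → MvPolynomial (Fin d) ℝ)
    (B : (n : ℕ) → Fin d → Matrix (Idx d n) (Idx d n) ℝ)
    (C : (n : ℕ) → Fin d → Matrix (Idx d (n + 1)) (Idx d n) ℝ) : Prop where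
  zero : ∀ i, (X i : MvPolynomial (Fin d) ℝ) • w 0 =
    matVec (Lmat d 0 i) (w 1) + matVec (B 0 i) (w 0)
  succ : ∀ n i, (X i : MvPolynomial (Fin d) ℝ) • w (n + 1) =
    matVec (Lmat d (n + 1) i) (w (n + 2)) + matVec (B (n + 1) i) (w (n + 1)) + matVec (C n i) (w n)

lemma hasThreeTerm_iff_apply (w : (n : ℕ) → Idx d n → MvPolynomial (Fin d) ℝ)
    (B : (n : ℕ) → Fin d → Matrix (Idx d n) (Idx d n) ℝ)
    (C : (n : ℕ) → Fin d → Matrix (Idx d (n + 1)) (Idx d n) ℝ) :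
    HasThreeTerm w B C ↔
      ((∀ (i : Fin d) (α : Idx d 0),
          X i * w 0 α = matVec (Lmat d 0 i) (w 1) α + matVec (B 0 i) (w 0) α) ∧
        ∀ (n : ℕ) (i : Fin d) (α : Idx d (n + 1)),
          X i * w (n + 1) α = matVec (Lmat d (n + 1) i) (w (n + 2)) α +
            matVec (B (n + 1) i) (w (n + 1)) α + matVec (C n i) (w n) α) :=
  ⟨fun h => ⟨fun i => congrFun (h.zero i), fun n i => congrFun (h.succ n i)⟩,
    fun h => ⟨fun i => funext (h.1 i), fun n i => funext (h.2 n i)⟩⟩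

section Orthogonality

variable (T : MvPolynomial (Fin d) ℝ →ₗ[ℝ] ℝ)

lemma map_mul_eq_zero_of_forall_vec (S : PolySystem d) {q : MvPolynomial (Fin d) ℝ}
    (h : ∀ m γ, T (S.vec m γ * q) = 0) (s : MvPolynomial (Fin d) ℝ) : T (s * q) = 0 := by
  have hs := S.spans _ s le_rfl
  generalize s.totalDegree = N at hs
  induction hs using Submodule.span_induction with
  | mem _ hx => obtain ⟨m, -, γ, rfl⟩ := hx; exact h m γ
  | zero => simp
  | add _ _ _ _ hx hy => simp [add_mul, hx, hy]
  | smul _ _ _ hx => simp [hx]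

lemma exists_monomial_eq_X_mul {m : ℕ} {ν : Fin d →₀ ℕ} (hν : (ν.sum fun _ e => e) = m + 1) :
    ∃ (i : Fin d) (ν' : Fin d →₀ ℕ), (ν'.sum fun _ e => e) = m ∧
      monomial ν (1 : ℝ) = X i * monomial ν' 1 := by
  obtain ⟨i, hi⟩ : ∃ i, ν i ≠ 0 := by
    by_contra! h
    simp [show ν = 0 from Finsupp.ext h] at hν
  have hle : Finsupp.single i 1 ≤ ν := Finsupp.single_le_iff.mpr (Nat.one_le_iff_ne_zero.mpr hi)
  have hadd : Finsupp.single i 1 + (ν - Finsupp.single i 1) = ν := add_tsub_cancel_of_le hle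
  refine ⟨i, ν - Finsupp.single i 1, ?_, by rw [X, monomial_mul, one_mul, hadd]⟩
  have h : Finsupp.degree ν = 1 + Finsupp.degree (ν - Finsupp.single i 1) := by
    conv_lhs => rw [← hadd]
    rw [map_add, Finsupp.degree_single]
  change Finsupp.degree ν = m + 1 at hν
  change Finsupp.degree _ = m
  omega

/-- Induction on the degree of a monomial `x_i x^ν'`: the three term relation moves `x_i` onto
`w n`, leaving `x^ν'` against `w (n + 1)`, `w n`, `w (n - 1)`, all of degree above `|ν'|`. -/
lemma map_mul_eq_zero_of_threeTerm {w : (n : ℕ) → Idx d n → MvPolynomial (Fin d) ℝ}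
    (A : (n : ℕ) → Fin d → Matrix (Idx d n) (Idx d (n + 1)) ℝ)
    (B : (n : ℕ) → Fin d → Matrix (Idx d n) (Idx d n) ℝ)
    (C : (n : ℕ) → Fin d → Matrix (Idx d (n + 1)) (Idx d n) ℝ)
    (hrel : ∀ n i, (X i : MvPolynomial (Fin d) ℝ) • w (n + 1) =
      matVec (A (n + 1) i) (w (n + 2)) + matVec (B (n + 1) i) (w (n + 1)) + matVec (C n i) (w n))
    (hT : ∀ n β, T (w (n + 1) β) = 0) {n : ℕ} {p : MvPolynomial (Fin d) ℝ}
    (hp : p ∈ totalDegreeLT d n) (β : Idx d n) : T (p * w n β) = 0 := by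
  suffices h : ∀ m (ν : Fin d →₀ ℕ), (ν.sum fun _ e => e) = m →
      ∀ n, m < n → ∀ β : Idx d n, T (monomial ν 1 * w n β) = 0 from
    map_mul_eq_zero_of_mem_totalDegreeLT T (fun ν hν => h _ ν rfl n hν β) hp
  have hmatVec : ∀ {k : ℕ} {ι : Type} (M : Matrix ι (Idx d k) ℝ) (q : MvPolynomial (Fin d) ℝ)
      (j : ι), (∀ δ, T (q * w k δ) = 0) → T (q * matVec M (w k) j) = 0 := by
    intro k ι M q j h
    simp [matVec, Finset.mul_sum, h]
  intro m
  induction m with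
  | zero =>
    rintro ν hν (_ | k) hk β
    · exact absurd hk (lt_irrefl 0)
    · rw [(Finsupp.degree_eq_zero_iff ν).mp hν, monomial_zero', C_1, one_mul]
      exact hT k β
  | succ m ih =>
    rintro ν hν (_ | k) hk β
    · exact absurd hk (Nat.not_lt_zero _)
    obtain ⟨i, ν', hν', hmon⟩ := exists_monomial_eq_X_mul hν
    have hx : X i * w (k + 1) β = ((X i : MvPolynomial (Fin d) ℝ) • w (k + 1)) β := rfl
    rw [hmon, mul_comm (X i), mul_assoc, hx, hrel k i]
    simp only [Pi.add_apply, mul_add, map_add]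
    rw [hmatVec _ _ _ fun δ => ih ν' hν' _ (by omega) δ,
      hmatVec _ _ _ fun δ => ih ν' hν' _ (by omega) δ,
      hmatVec _ _ _ fun δ => ih ν' hν' _ (by omega) δ, add_zero, add_zero]

/-- A kernel vector `c` of the Gram matrix makes `q = ∑ c_β S_n,β` orthogonal to every `S_k`,
hence to all polynomials, so `q = 0` and `c = 0`. -/
lemma isOPS_of_orthogonal (S : PolySystem d) (hS : ∀ n, IsMonicVec n (S.vec n))
    (horth : ∀ n p, p ∈ totalDegreeLT d n → ∀ β, T (p * S.vec n β) = 0)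
    (hnd : ∀ q, (∀ s, T (s * q) = 0) → q = 0) : IsOPS T S := by
  refine ⟨fun m n hmn α β => horth n _ ?_ β, fun n => ?_⟩
  · exact totalDegreeLT_mono hmn ((isMonicVec_monIdx m).mem_totalDegreeLT_succ α)
  rw [isUnit_iff_ne_zero]
  intro hdet
  obtain ⟨c, hc0, hc⟩ := Matrix.exists_mulVec_eq_zero_iff.mpr hdet
  set q := ∑ β, c β • S.vec n β with hq_def
  have hexp : ∀ s, T (s * q) = ∑ β, c β * T (s * S.vec n β) := fun s => by
    simp [q, Finset.mul_sum, map_sum]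
  have hlow : ∀ p ∈ totalDegreeLT d n, T (p * q) = 0 := fun p hp => by
    simp [hexp, horth n p hp]
  have htop : ∀ α, T (monIdx α * q) = 0 := fun α => by
    simpa [hexp, Matrix.mulVec, dotProduct, mul_comm] using congrFun hc α
  have hvec : ∀ k γ, T (S.vec k γ * q) = 0 := by
    intro k γ
    rcases lt_trichotomy k n with hk | rfl | hk
    · exact hlow _ (totalDegreeLT_mono hk ((hS k).mem_totalDegreeLT_succ γ))
    · rw [← sub_add_cancel (S.vec k γ) (monIdx γ), add_mul, map_add, hlow _ (hS k γ), htop,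
        add_zero]
    · rw [hexp]
      refine Finset.sum_eq_zero fun β _ => ?_
      rw [mul_comm (S.vec k γ),
        horth k _ (totalDegreeLT_mono hk ((hS n).mem_totalDegreeLT_succ β)) γ, mul_zero]
  have hq : q = 0 := hnd q (map_mul_eq_zero_of_forall_vec T S hvec)
  refine hc0 (funext fun β => ?_)
  have hβ := (hS n).coeff_sum_smul c β
  rwa [← hq_def, hq, coeff_zero, eq_comm] at hβ

end Orthogonality

section QuasiDefinite

variable {u : MvPolynomial (Fin d) ℝ →ₗ[ℝ] ℝ} {P : PolySystem d}

lemma IsOPS.map_mul_eq_zero (hP : IsOPS u P) {n : ℕ} {p : MvPolynomial (Fin d) ℝ}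
    (hp : p ∈ totalDegreeLT d n) (β : Idx d n) : u (p * P.vec n β) = 0 :=
  map_mul_eq_zero_of_mem_totalDegreeLT u
    (fun ν hν => by simpa [monIdx_eq_monomial] using hP.1 _ n hν (Idx.ofFinsupp ν) β) hp

/-- The top-degree coefficients `a` of `r` satisfy `a ⬝ ⟨u, 𝕏_m ℙ_m^t⟩ = 0`, `m = deg r`. -/
lemma IsOPS.eq_zero_of_forall_map_mul_eq_zero (hP : IsOPS u P) {r : MvPolynomial (Fin d) ℝ}
    (h : ∀ m γ, u (P.vec m γ * r) = 0) : r = 0 := by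
  set m := r.totalDegree
  set a : Idx d m → ℝ := fun β => coeff β.toFinsupp r
  set G := Matrix.of fun α β : Idx d m => u (monIdx α * P.vec m β)
  have hlow : r - ∑ β, a β • monIdx β ∈ totalDegreeLT d m :=
    (isMonicVec_monIdx m).sub_sum_coeff_smul_mem (mem_totalDegreeLT_succ_iff.mpr le_rfl)
  have haG : a ᵥ* G = 0 := funext fun γ => by
    have h1 := hP.map_mul_eq_zero hlow γ
    rw [sub_mul, map_sub, mul_comm r, h m γ, zero_sub, neg_eq_zero] at h1
    simpa [Matrix.vecMul, dotProduct, Finset.sum_mul, G] using h1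
  have ha : a = 0 := by
    rw [← Matrix.vecMul_one a, ← Matrix.mul_nonsing_inv G (hP.2 m), ← Matrix.vecMul_vecMul, haG,
      Matrix.zero_vecMul]
  simp only [ha, Pi.zero_apply, zero_smul, Finset.sum_const_zero, sub_zero] at hlow
  exact eq_zero_of_mem_totalDegreeLT_totalDegree hlow

lemma IsOPS.Hmat_eq (hP : IsOPS u P) (hmon : P.IsMonic) (n : ℕ) :
    Hmat u P n = Matrix.of fun α β : Idx d n => u (monIdx α * P.vec n β) := by
  ext α β
  have h := hP.map_mul_eq_zero (hmon.isMonicVec n α) β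
  rwa [sub_mul, map_sub, sub_eq_zero] at h

lemma IsOPS.isUnit_det_Hmat (hP : IsOPS u P) (hmon : P.IsMonic) (n : ℕ) :
    IsUnit (Hmat u P n).det := by
  rw [hP.Hmat_eq hmon]
  exact hP.2 n

lemma IsOPS.eq_zero_of_forall_map_mulLeft (hP : IsOPS u P) {l q : MvPolynomial (Fin d) ℝ}
    (hl : l ≠ 0) (h : ∀ s, u.comp (LinearMap.mulLeft ℝ l) (s * q) = 0) : q = 0 := by
  have hlq : l * q = 0 := hP.eq_zero_of_forall_map_mul_eq_zero fun m γ => by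
    simpa [mul_left_comm] using h (P.vec m γ)
  exact (mul_eq_zero.mp hlq).resolve_left hl

end QuasiDefinite

section Moments

variable {u : MvPolynomial (Fin d) ℝ →ₗ[ℝ] ℝ} {P : PolySystem d}

lemma IsOPS.map_vec_mul_vec_of_ne (hP : IsOPS u P) {k m : ℕ} (h : k ≠ m) (β : Idx d k)
    (γ : Idx d m) : u (P.vec k β * P.vec m γ) = 0 := by
  rcases h.lt_or_gt with h | h
  · exact hP.map_mul_eq_zero (mem_totalDegreeLT_of_totalDegree_lt (by rwa [P.degree_eq])) γ
  · rw [mul_comm]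
    exact hP.map_mul_eq_zero (mem_totalDegreeLT_of_totalDegree_lt (by rwa [P.degree_eq])) β

lemma IsOPS.map_sum_smul_mul_of_ne (hP : IsOPS u P) {k m : ℕ} (h : k ≠ m) (f : Idx d k → ℝ)
    (γ : Idx d m) : u ((∑ β, f β • P.vec k β) * P.vec m γ) = 0 := by
  simp [Finset.sum_mul, hP.map_vec_mul_vec_of_ne h]

lemma map_sum_smul_mul_vec {k : ℕ} (f : Idx d k → ℝ) (γ : Idx d k) :
    u ((∑ β, f β • P.vec k β) * P.vec k γ) = (f ᵥ* Hmat u P k) γ := by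
  simp [Finset.sum_mul, Hmat, Matrix.vecMul, dotProduct]

lemma sum_sum_mul_smul_eq_sum_vecMul_smul {ι : Type} [Fintype ι] (m : ι → ℝ) (A : Matrix ι ι ℝ)
    (w : ι → MvPolynomial (Fin d) ℝ) :
    ∑ α, ∑ β, (m α * A α β) • w β = ∑ β, (m ᵥ* A) β • w β := by
  rw [Finset.sum_comm]
  simp [Matrix.vecMul, dotProduct, Finset.sum_smul]

variable (u P) in
/-- With `m₀ = 1`, `m₁ = M_1`, `m₂ = N_2` this is the paper's
`λ = N_2^t H_2⁻¹ ℙ_2 + M_1^t H_1⁻¹ ℙ_1 + H_0⁻¹ ℙ_0`. -/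
noncomputable def polyOfMoments (m₀ : Idx d 0 → ℝ) (m₁ : Idx d 1 → ℝ) (m₂ : Idx d 2 → ℝ) :
    MvPolynomial (Fin d) ℝ :=
  ∑ β, (m₂ ᵥ* (Hmat u P 2)⁻¹) β • P.vec 2 β + ∑ β, (m₁ ᵥ* (Hmat u P 1)⁻¹) β • P.vec 1 β +
    ∑ β, (m₀ ᵥ* (Hmat u P 0)⁻¹) β • P.vec 0 β

lemma polyOfMoments_one_eq (m₁ : Idx d 1 → ℝ) (m₂ : Idx d 2 → ℝ) :
    polyOfMoments u P 1 m₁ m₂ =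
      (∑ α, ∑ β, (m₂ α * (Hmat u P 2)⁻¹ α β) • P.vec 2 β) +
        (∑ α, ∑ β, (m₁ α * (Hmat u P 1)⁻¹ α β) • P.vec 1 β) +
        ((Hmat u P 0)⁻¹ zeroIdx zeroIdx) • P.vec 0 zeroIdx := by
  rw [sum_sum_mul_smul_eq_sum_vecMul_smul, sum_sum_mul_smul_eq_sum_vecMul_smul, polyOfMoments]
  congr 1
  simp [Matrix.vecMul, dotProduct]

variable (hP : IsOPS u P) {m₀ : Idx d 0 → ℝ} {m₁ : Idx d 1 → ℝ} {m₂ : Idx d 2 → ℝ}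
include hP

lemma map_polyOfMoments_mul_vec_add_three {k : ℕ} (γ : Idx d (k + 3)) :
    u (polyOfMoments u P m₀ m₁ m₂ * P.vec (k + 3) γ) = 0 := by
  rw [polyOfMoments, add_mul, add_mul, map_add, map_add,
    hP.map_sum_smul_mul_of_ne (k := 2) (by omega), hP.map_sum_smul_mul_of_ne (k := 1) (by omega),
    hP.map_sum_smul_mul_of_ne (k := 0) (by omega), add_zero, add_zero]

variable (hmon : P.IsMonic)
include hmon

lemma vecMul_inv_Hmat_vecMul (k : ℕ) (m : Idx d k → ℝ) :
    m ᵥ* (Hmat u P k)⁻¹ ᵥ* Hmat u P k = m := by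
  rw [Matrix.vecMul_vecMul, Matrix.nonsing_inv_mul _ (hP.isUnit_det_Hmat hmon k),
    Matrix.vecMul_one]

lemma map_polyOfMoments_mul_vec_zero (γ : Idx d 0) :
    u (polyOfMoments u P m₀ m₁ m₂ * P.vec 0 γ) = m₀ γ := by
  rw [polyOfMoments, add_mul, add_mul, map_add, map_add,
    hP.map_sum_smul_mul_of_ne (k := 2) (by norm_num),
    hP.map_sum_smul_mul_of_ne (k := 1) (by norm_num), map_sum_smul_mul_vec,
    vecMul_inv_Hmat_vecMul hP hmon, zero_add, zero_add]

lemma map_polyOfMoments_mul_vec_one (γ : Idx d 1) :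
    u (polyOfMoments u P m₀ m₁ m₂ * P.vec 1 γ) = m₁ γ := by
  rw [polyOfMoments, add_mul, add_mul, map_add, map_add,
    hP.map_sum_smul_mul_of_ne (k := 2) (by norm_num),
    hP.map_sum_smul_mul_of_ne (k := 0) (by norm_num), map_sum_smul_mul_vec,
    vecMul_inv_Hmat_vecMul hP hmon, zero_add, add_zero]

lemma map_polyOfMoments_mul_vec_two (γ : Idx d 2) :
    u (polyOfMoments u P m₀ m₁ m₂ * P.vec 2 γ) = m₂ γ := by
  rw [polyOfMoments, add_mul, add_mul, map_add, map_add,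
    hP.map_sum_smul_mul_of_ne (k := 1) (by norm_num),
    hP.map_sum_smul_mul_of_ne (k := 0) (by norm_num), map_sum_smul_mul_vec,
    vecMul_inv_Hmat_vecMul hP hmon, add_zero, add_zero]

lemma totalDegree_polyOfMoments (hm₂ : m₂ ≠ 0) :
    (polyOfMoments u P m₀ m₁ m₂).totalDegree = 2 := by
  have hsum : ∀ {k n}, k < n → ∀ f : Idx d k → ℝ, ∑ β, f β • P.vec k β ∈ totalDegreeLT d n :=
    fun hk f => Submodule.sum_mem _ fun β _ => Submodule.smul_mem _ _
      (totalDegreeLT_mono hk ((hmon.isMonicVec _).mem_totalDegreeLT_succ β))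
  refine le_antisymm (mem_totalDegreeLT_succ_iff.mp ?_) ?_
  · exact add_mem (add_mem (hsum (by omega) _) (hsum (by omega) _)) (hsum (by omega) _)
  obtain ⟨β, hβ⟩ : ∃ β, (m₂ ᵥ* (Hmat u P 2)⁻¹) β ≠ 0 := by
    by_contra! h
    exact hm₂ (by rw [← vecMul_inv_Hmat_vecMul hP hmon 2 m₂, show m₂ ᵥ* _ = 0 from funext h,
      Matrix.zero_vecMul])
  have hcoeff : coeff β.toFinsupp (polyOfMoments u P m₀ m₁ m₂) = (m₂ ᵥ* (Hmat u P 2)⁻¹) β := by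
    rw [polyOfMoments, add_assoc, coeff_add, (hmon.isMonicVec 2).coeff_sum_smul,
      coeff_eq_zero_of_mem_totalDegreeLT (add_mem (hsum (by omega) _) (hsum (by omega) _))
        β.sum_toFinsupp.ge, add_zero]
  have h := le_totalDegree (mem_support_iff.mpr (hcoeff ▸ hβ))
  rwa [β.sum_toFinsupp] at h

end Moments

structure IsPerturbedSeq (P : PolySystem d) (M : (n : ℕ) → Matrix (Idx d (n + 1)) (Idx d n) ℝ)
    (Nm : (n : ℕ) → Matrix (Idx d (n + 2)) (Idx d n) ℝ)
    (Qv : (n : ℕ) → Idx d n → MvPolynomial (Fin d) ℝ) : Prop where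
  zero : Qv 0 = P.vec 0
  one : Qv 1 = P.vec 1 - matVec (M 0) (Qv 0)
  add_two : ∀ n, Qv (n + 2) = P.vec (n + 2) - matVec (M (n + 1)) (Qv (n + 1)) - matVec (Nm n) (Qv n)

namespace IsPerturbedSeq

variable {P : PolySystem d} {M : (n : ℕ) → Matrix (Idx d (n + 1)) (Idx d n) ℝ}
  {Nm : (n : ℕ) → Matrix (Idx d (n + 2)) (Idx d n) ℝ}
  {Qv : (n : ℕ) → Idx d n → MvPolynomial (Fin d) ℝ}

lemma vec_one (hQ : IsPerturbedSeq P M Nm Qv) : P.vec 1 = Qv 1 + matVec (M 0) (Qv 0) := by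
  rw [hQ.one, sub_add_cancel]

lemma vec_add_two (hQ : IsPerturbedSeq P M Nm Qv) (n : ℕ) :
    P.vec (n + 2) = Qv (n + 2) + matVec (M (n + 1)) (Qv (n + 1)) + matVec (Nm n) (Qv n) := by
  rw [hQ.add_two]; abel

lemma isMonicVec (hQ : IsPerturbedSeq P M Nm Qv) (hP : P.IsMonic) (n : ℕ) :
    IsMonicVec n (Qv n) := by
  suffices h : ∀ n, IsMonicVec n (Qv n) ∧ IsMonicVec (n + 1) (Qv (n + 1)) from (h n).1
  have hP' := hP.isMonicVec
  intro n
  induction n with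
  | zero =>
    refine ⟨hQ.zero ▸ hP' 0, fun α => ?_⟩
    rw [hQ.one, Pi.sub_apply, sub_right_comm]
    exact sub_mem (hP' 1 α) ((hQ.zero ▸ hP' 0).matVec_mem_totalDegreeLT one_pos _ α)
  | succ n ih =>
    refine ⟨ih.2, fun α => ?_⟩
    rw [hQ.add_two, Pi.sub_apply, Pi.sub_apply, sub_right_comm, sub_right_comm _ (matVec _ _ α)]
    exact sub_mem (sub_mem (hP' _ α) (ih.2.matVec_mem_totalDegreeLT (by omega) _ α))
      (ih.1.matVec_mem_totalDegreeLT (by omega) _ α)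

lemma matVec_mem_totalDegreeLT (hQ : IsPerturbedSeq P M Nm Qv) (hP : P.IsMonic) {k n : ℕ}
    (h : k < n) {ι : Type} (A : Matrix ι (Idx d k) ℝ) (j : ι) :
    matVec A (Qv k) j ∈ totalDegreeLT d n :=
  (hQ.isMonicVec hP k).matVec_mem_totalDegreeLT h A j

section ThreeTerm

variable (hQ : IsPerturbedSeq P M Nm Qv)
  {B : (n : ℕ) → Fin d → Matrix (Idx d n) (Idx d n) ℝ}
  {C : (n : ℕ) → Fin d → Matrix (Idx d (n + 1)) (Idx d n) ℝ} (hP : HasThreeTerm P.vec B C)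
  (Bh : (n : ℕ) → Fin d → Matrix (Idx d n) (Idx d n) ℝ)
  (Ch : (n : ℕ) → Fin d → Matrix (Idx d (n + 1)) (Idx d n) ℝ) (i : Fin d)
include hQ hP

lemma threeTerm_zero_sub :
    matVec (Lmat d 0 i) (Qv 1) + matVec (Bh 0 i) (Qv 0) - (X i : MvPolynomial (Fin d) ℝ) • Qv 0
      = matVec (Bh 0 i - (B 0 i + Lmat d 0 i * M 0)) (Qv 0) := by
  rw [hQ.zero, hP.zero i, hQ.vec_one, ← hQ.zero]
  simp only [matVec_add, add_matVec, sub_matVec, matVec_matVec]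
  abel

lemma threeTerm_one_sub (h0 : (X i : MvPolynomial (Fin d) ℝ) • Qv 0 =
      matVec (Lmat d 0 i) (Qv 1) + matVec (Bh 0 i) (Qv 0)) :
    matVec (Lmat d 1 i) (Qv 2) + matVec (Bh 1 i) (Qv 1) + matVec (Ch 0 i) (Qv 0) -
        (X i : MvPolynomial (Fin d) ℝ) • Qv 1
      = matVec (Bh 1 i - (B 1 i - M 0 * Lmat d 0 i + Lmat d 1 i * M 1)) (Qv 1) +
        matVec (Ch 0 i - (C 0 i - M 0 * Bh 0 i + B 1 i * M 0 + Lmat d 1 i * Nm 0)) (Qv 0) := by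
  rw [hQ.one, smul_sub, smul_matVec, h0, hP.succ 0 i, hQ.vec_add_two 0, hQ.vec_one, ← hQ.zero]
  simp only [matVec_add, matVec_sub, add_matVec, sub_matVec, matVec_matVec]
  abel

lemma threeTerm_two_sub
    (h0 : (X i : MvPolynomial (Fin d) ℝ) • Qv 0 =
      matVec (Lmat d 0 i) (Qv 1) + matVec (Bh 0 i) (Qv 0))
    (h1 : (X i : MvPolynomial (Fin d) ℝ) • Qv 1 =
      matVec (Lmat d 1 i) (Qv 2) + matVec (Bh 1 i) (Qv 1) + matVec (Ch 0 i) (Qv 0)) :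
    matVec (Lmat d 2 i) (Qv 3) + matVec (Bh 2 i) (Qv 2) + matVec (Ch 1 i) (Qv 1) -
        (X i : MvPolynomial (Fin d) ℝ) • Qv 2
      = matVec (Bh 2 i - (B 2 i - M 1 * Lmat d 1 i + Lmat d 2 i * M 2)) (Qv 2) +
        (matVec (Ch 1 i - (C 1 i - M 1 * Bh 1 i + B 2 i * M 1 - Nm 0 * Lmat d 0 i +
            Lmat d 2 i * Nm 1)) (Qv 1) +
          matVec (M 1 * Ch 0 i + Nm 0 * Bh 0 i - (C 1 i * M 0 + B 2 i * Nm 0)) (Qv 0)) := by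
  rw [hQ.add_two 0, smul_sub, smul_sub, smul_matVec, smul_matVec, h1, h0, hP.succ 1 i,
    hQ.vec_add_two 1, hQ.vec_add_two 0, hQ.vec_one]
  simp only [matVec_add, matVec_sub, add_matVec, sub_matVec, matVec_matVec]
  abel

lemma threeTerm_add_three_sub (n : ℕ)
    (h1 : (X i : MvPolynomial (Fin d) ℝ) • Qv (n + 1) = matVec (Lmat d (n + 1) i) (Qv (n + 2)) +
      matVec (Bh (n + 1) i) (Qv (n + 1)) + matVec (Ch n i) (Qv n))
    (h2 : (X i : MvPolynomial (Fin d) ℝ) • Qv (n + 2) = matVec (Lmat d (n + 2) i) (Qv (n + 3)) +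
      matVec (Bh (n + 2) i) (Qv (n + 2)) + matVec (Ch (n + 1) i) (Qv (n + 1))) :
    matVec (Lmat d (n + 3) i) (Qv (n + 4)) + matVec (Bh (n + 3) i) (Qv (n + 3)) +
        matVec (Ch (n + 2) i) (Qv (n + 2)) - (X i : MvPolynomial (Fin d) ℝ) • Qv (n + 3)
      = matVec (Bh (n + 3) i -
          (B (n + 3) i - M (n + 2) * Lmat d (n + 2) i + Lmat d (n + 3) i * M (n + 3)))
          (Qv (n + 3)) +
        (matVec (Ch (n + 2) i - (C (n + 2) i - M (n + 2) * Bh (n + 2) i + B (n + 3) i * M (n + 2) -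
            Nm (n + 1) * Lmat d (n + 1) i + Lmat d (n + 3) i * Nm (n + 2))) (Qv (n + 2)) +
          (matVec (M (n + 2) * Ch (n + 1) i + Nm (n + 1) * Bh (n + 1) i -
              (C (n + 2) i * M (n + 1) + B (n + 3) i * Nm (n + 1))) (Qv (n + 1)) +
            matVec (Nm (n + 1) * Ch n i - C (n + 2) i * Nm n) (Qv n))) := by
  rw [hQ.add_two (n + 1), smul_sub, smul_sub, smul_matVec, smul_matVec, h2, h1, hP.succ (n + 2) i,
    hQ.vec_add_two (n + 2), hQ.vec_add_two (n + 1), hQ.vec_add_two n]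
  simp only [matVec_add, matVec_sub, add_matVec, sub_matVec, matVec_matVec]
  abel

variable (hmon : P.IsMonic)
include hmon

lemma threeTerm_zero_iff :
    (X i : MvPolynomial (Fin d) ℝ) • Qv 0 = matVec (Lmat d 0 i) (Qv 1) + matVec (Bh 0 i) (Qv 0) ↔
      Bh 0 i = B 0 i + Lmat d 0 i * M 0 := by
  rw [eq_comm, ← sub_eq_zero, hQ.threeTerm_zero_sub hP, (hQ.isMonicVec hmon 0).matVec_eq_zero_iff,
    sub_eq_zero]

lemma threeTerm_one_iff (h0 : (X i : MvPolynomial (Fin d) ℝ) • Qv 0 =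
      matVec (Lmat d 0 i) (Qv 1) + matVec (Bh 0 i) (Qv 0)) :
    (X i : MvPolynomial (Fin d) ℝ) • Qv 1 =
        matVec (Lmat d 1 i) (Qv 2) + matVec (Bh 1 i) (Qv 1) + matVec (Ch 0 i) (Qv 0) ↔
      Bh 1 i = B 1 i - M 0 * Lmat d 0 i + Lmat d 1 i * M 1 ∧
      Ch 0 i = C 0 i - M 0 * Bh 0 i + B 1 i * M 0 + Lmat d 1 i * Nm 0 := by
  rw [eq_comm, ← sub_eq_zero, hQ.threeTerm_one_sub hP Bh Ch i h0,
    (hQ.isMonicVec hmon 1).matVec_add_eq_zero_iff _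
      (hQ.matVec_mem_totalDegreeLT hmon Nat.one_pos _),
    (hQ.isMonicVec hmon 0).matVec_eq_zero_iff, sub_eq_zero, sub_eq_zero]

lemma threeTerm_two_iff
    (h0 : (X i : MvPolynomial (Fin d) ℝ) • Qv 0 =
      matVec (Lmat d 0 i) (Qv 1) + matVec (Bh 0 i) (Qv 0))
    (h1 : (X i : MvPolynomial (Fin d) ℝ) • Qv 1 =
      matVec (Lmat d 1 i) (Qv 2) + matVec (Bh 1 i) (Qv 1) + matVec (Ch 0 i) (Qv 0)) :
    (X i : MvPolynomial (Fin d) ℝ) • Qv 2 =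
        matVec (Lmat d 2 i) (Qv 3) + matVec (Bh 2 i) (Qv 2) + matVec (Ch 1 i) (Qv 1) ↔
      Bh 2 i = B 2 i - M 1 * Lmat d 1 i + Lmat d 2 i * M 2 ∧
      Ch 1 i = C 1 i - M 1 * Bh 1 i + B 2 i * M 1 - Nm 0 * Lmat d 0 i + Lmat d 2 i * Nm 1 ∧
      M 1 * Ch 0 i + Nm 0 * Bh 0 i = C 1 i * M 0 + B 2 i * Nm 0 := by
  rw [eq_comm, ← sub_eq_zero, hQ.threeTerm_two_sub hP Bh Ch i h0 h1,
    (hQ.isMonicVec hmon 2).matVec_add_eq_zero_iff _ ?low,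
    (hQ.isMonicVec hmon 1).matVec_add_eq_zero_iff _
      (hQ.matVec_mem_totalDegreeLT hmon Nat.one_pos _),
    (hQ.isMonicVec hmon 0).matVec_eq_zero_iff, sub_eq_zero, sub_eq_zero, sub_eq_zero]
  case low =>
    refine fun j => add_mem ?_ ?_ <;> exact hQ.matVec_mem_totalDegreeLT hmon (by omega) _ j

lemma threeTerm_add_three_iff (n : ℕ)
    (h1 : (X i : MvPolynomial (Fin d) ℝ) • Qv (n + 1) = matVec (Lmat d (n + 1) i) (Qv (n + 2)) +
      matVec (Bh (n + 1) i) (Qv (n + 1)) + matVec (Ch n i) (Qv n))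
    (h2 : (X i : MvPolynomial (Fin d) ℝ) • Qv (n + 2) = matVec (Lmat d (n + 2) i) (Qv (n + 3)) +
      matVec (Bh (n + 2) i) (Qv (n + 2)) + matVec (Ch (n + 1) i) (Qv (n + 1))) :
    (X i : MvPolynomial (Fin d) ℝ) • Qv (n + 3) = matVec (Lmat d (n + 3) i) (Qv (n + 4)) +
        matVec (Bh (n + 3) i) (Qv (n + 3)) + matVec (Ch (n + 2) i) (Qv (n + 2)) ↔
      Bh (n + 3) i = B (n + 3) i - M (n + 2) * Lmat d (n + 2) i + Lmat d (n + 3) i * M (n + 3) ∧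
      Ch (n + 2) i = C (n + 2) i - M (n + 2) * Bh (n + 2) i + B (n + 3) i * M (n + 2) -
        Nm (n + 1) * Lmat d (n + 1) i + Lmat d (n + 3) i * Nm (n + 2) ∧
      M (n + 2) * Ch (n + 1) i + Nm (n + 1) * Bh (n + 1) i =
        C (n + 2) i * M (n + 1) + B (n + 3) i * Nm (n + 1) ∧
      C (n + 2) i * Nm n = Nm (n + 1) * Ch n i := by
  rw [eq_comm, ← sub_eq_zero, hQ.threeTerm_add_three_sub hP Bh Ch i n h1 h2,
    (hQ.isMonicVec hmon _).matVec_add_eq_zero_iff _ ?low3,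
    (hQ.isMonicVec hmon _).matVec_add_eq_zero_iff _ ?low2,
    (hQ.isMonicVec hmon _).matVec_add_eq_zero_iff _
      (hQ.matVec_mem_totalDegreeLT hmon (by omega) _),
    (hQ.isMonicVec hmon _).matVec_eq_zero_iff, sub_eq_zero, sub_eq_zero, sub_eq_zero, sub_eq_zero,
    eq_comm (a := Nm (n + 1) * Ch n i)]
  case low3 =>
    refine fun j => add_mem ?_ (add_mem ?_ ?_) <;>
      exact hQ.matVec_mem_totalDegreeLT hmon (by omega) _ j
  case low2 =>
    refine fun j => add_mem ?_ ?_ <;> exact hQ.matVec_mem_totalDegreeLT hmon (by omega) _ j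

lemma hasThreeTerm_iff : HasThreeTerm Qv Bh Ch ↔
    ((∀ i : Fin d, Bh 0 i = B 0 i + Lmat d 0 i * M 0) ∧
     (∀ (n : ℕ) (i : Fin d),
       Bh (n + 1) i = B (n + 1) i - M n * Lmat d n i + Lmat d (n + 1) i * M (n + 1)) ∧
     (∀ i : Fin d,
       Ch 0 i = C 0 i - M 0 * Bh 0 i + B 1 i * M 0 + Lmat d 1 i * Nm 0) ∧
     (∀ (n : ℕ) (i : Fin d),
       Ch (n + 1) i = C (n + 1) i - M (n + 1) * Bh (n + 1) i + B (n + 2) i * M (n + 1) -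
         Nm n * Lmat d n i + Lmat d (n + 2) i * Nm (n + 1)) ∧
     (∀ (n : ℕ) (i : Fin d),
       M (n + 1) * Ch n i + Nm n * Bh n i = C (n + 1) i * M n + B (n + 2) i * Nm n) ∧
     (∀ (n : ℕ) (i : Fin d),
       C (n + 2) i * Nm n = Nm (n + 1) * Ch n i)) := by
  constructor
  · intro h
    have one i := (hQ.threeTerm_one_iff hP Bh Ch i hmon (h.zero i)).mp (h.succ 0 i)
    have two i :=
      (hQ.threeTerm_two_iff hP Bh Ch i hmon (h.zero i) (h.succ 0 i)).mp (h.succ 1 i)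
    have three n i :=
      (hQ.threeTerm_add_three_iff hP Bh Ch i hmon n (h.succ n i) (h.succ (n + 1) i)).mp
        (h.succ (n + 2) i)
    refine ⟨fun i => (hQ.threeTerm_zero_iff hP Bh i hmon).mp (h.zero i), ?_, fun i => (one i).2,
      ?_, ?_, fun n i => (three n i).2.2.2⟩
    · rintro (_ | _ | n) i
      exacts [(one i).1, (two i).1, (three n i).1]
    · rintro (_ | n) i
      exacts [(two i).2.1, (three n i).2.1]
    · rintro (_ | n) i
      exacts [(two i).2.2, (three n i).2.2.1]
  · rintro ⟨hB0, hB, hC0, hC, hBC, hCN⟩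
    have h0 i := (hQ.threeTerm_zero_iff hP Bh i hmon).mpr (hB0 i)
    have h1 i := (hQ.threeTerm_one_iff hP Bh Ch i hmon (h0 i)).mpr ⟨hB 0 i, hC0 i⟩
    have h2 i := (hQ.threeTerm_two_iff hP Bh Ch i hmon (h0 i) (h1 i)).mpr ⟨hB 1 i, hC 0 i, hBC 0 i⟩
    suffices h : ∀ n,
        (∀ i, (X i : MvPolynomial (Fin d) ℝ) • Qv (n + 1) = matVec (Lmat d (n + 1) i) (Qv (n + 2)) +
          matVec (Bh (n + 1) i) (Qv (n + 1)) + matVec (Ch n i) (Qv n)) ∧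
        (∀ i, (X i : MvPolynomial (Fin d) ℝ) • Qv (n + 2) = matVec (Lmat d (n + 2) i) (Qv (n + 3)) +
          matVec (Bh (n + 2) i) (Qv (n + 2)) + matVec (Ch (n + 1) i) (Qv (n + 1))) from
      ⟨h0, fun n => (h n).1⟩
    intro n
    induction n with
    | zero => exact ⟨h1, h2⟩
    | succ n ih =>
      exact ⟨ih.2, fun i => (hQ.threeTerm_add_three_iff hP Bh Ch i hmon n (ih.1 i) (ih.2 i)).mpr
        ⟨hB (n + 2) i, hC (n + 1) i, hBC (n + 1) i, hCN n i⟩⟩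

end ThreeTerm

lemma map_polyOfMoments_mul_succ {u : MvPolynomial (Fin d) ℝ →ₗ[ℝ] ℝ}
    (hQ : IsPerturbedSeq P M Nm Qv)
    (hP : IsOPS u P) (hmon : P.IsMonic) (n : ℕ) (β : Idx d (n + 1)) :
    u.comp (LinearMap.mulLeft ℝ
      (polyOfMoments u P 1 (fun α => M 0 α zeroIdx) (fun α => Nm 0 α zeroIdx))) (Qv (n + 1) β) =
      0 := by
  set T := u.comp (LinearMap.mulLeft ℝ
    (polyOfMoments u P 1 (fun α => M 0 α zeroIdx) (fun α => Nm 0 α zeroIdx)))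
  have hT : ∀ x, T x =
      u (polyOfMoments u P 1 (fun α => M 0 α zeroIdx) (fun α => Nm 0 α zeroIdx) * x) :=
    fun _ => rfl
  have h0 : ∀ δ, T (Qv 0 δ) = 1 := fun δ => by
    rw [hQ.zero, hT, map_polyOfMoments_mul_vec_zero hP hmon, Pi.one_apply]
  have h1 : ∀ β, T (Qv 1 β) = 0 := fun β => by
    rw [hQ.one, Pi.sub_apply, map_sub, map_matVec, hT, map_polyOfMoments_mul_vec_one hP hmon]
    simp [h0]
  suffices h : ∀ n, (∀ β, T (Qv (n + 1) β) = 0) ∧ (∀ β, T (Qv (n + 2) β) = 0) from (h n).1 β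
  intro n
  induction n with
  | zero =>
    refine ⟨h1, fun β => ?_⟩
    rw [hQ.add_two, Pi.sub_apply, Pi.sub_apply, map_sub, map_sub, map_matVec, map_matVec, hT,
      map_polyOfMoments_mul_vec_two hP hmon]
    simp [h0, h1]
  | succ n ih =>
    refine ⟨ih.2, fun β => ?_⟩
    rw [hQ.add_two, Pi.sub_apply, Pi.sub_apply, map_sub, map_sub, map_matVec, map_matVec, hT,
      map_polyOfMoments_mul_vec_add_three hP]
    simp [ih.1, ih.2]

end IsPerturbedSeq

end

/-- Indexing: `B n i = B_{n,i}`, `C n i = C_{n+1,i}`, `M n = M_{n+1}`, `Nm n = N_{n+2}`,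
`Bh n i = B̂_{n,i}`, `Ch n i = Ĉ_{n+1,i}`. -/
theorem christoffel_favard_general
    {d : ℕ}
    (u : MvPolynomial (Fin d) ℝ →ₗ[ℝ] ℝ)
    (P : PolySystem d) (hP : IsOPS u P) (hPmonic : P.IsMonic)
    (B : (n : ℕ) → Fin d → Matrix (Idx d n) (Idx d n) ℝ)
    (C : (n : ℕ) → Fin d → Matrix (Idx d (n + 1)) (Idx d n) ℝ)
    (h3term0 : ∀ (i : Fin d) (α : Idx d 0),
      X i * P.vec 0 α = matVec (Lmat d 0 i) (P.vec 1) α + matVec (B 0 i) (P.vec 0) α)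
    (h3term : ∀ (n : ℕ) (i : Fin d) (α : Idx d (n + 1)),
      X i * P.vec (n + 1) α = matVec (Lmat d (n + 1) i) (P.vec (n + 2)) α +
        matVec (B (n + 1) i) (P.vec (n + 1)) α + matVec (C n i) (P.vec n) α)
    (M : (n : ℕ) → Matrix (Idx d (n + 1)) (Idx d n) ℝ)
    (Nm : (n : ℕ) → Matrix (Idx d (n + 2)) (Idx d n) ℝ) (hN2 : Nm 0 ≠ 0)
    (Qv : (n : ℕ) → Idx d n → MvPolynomial (Fin d) ℝ)
    (hQ0 : Qv 0 = P.vec 0)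
    (hQ1 : ∀ α : Idx d 1, Qv 1 α = P.vec 1 α - matVec (M 0) (Qv 0) α)
    (hQrec : ∀ (n : ℕ) (α : Idx d (n + 2)),
      Qv (n + 2) α = P.vec (n + 2) α - matVec (M (n + 1)) (Qv (n + 1)) α -
        matVec (Nm n) (Qv n) α)
    (Bh : (n : ℕ) → Fin d → Matrix (Idx d n) (Idx d n) ℝ)
    (Ch : (n : ℕ) → Fin d → Matrix (Idx d (n + 1)) (Idx d n) ℝ) :
    -- the three term relation for `{ℚ_n}` …
    (((∀ (i : Fin d) (α : Idx d 0),
        X i * Qv 0 α = matVec (Lmat d 0 i) (Qv 1) α + matVec (Bh 0 i) (Qv 0) α) ∧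
      (∀ (n : ℕ) (i : Fin d) (α : Idx d (n + 1)),
        X i * Qv (n + 1) α = matVec (Lmat d (n + 1) i) (Qv (n + 2)) α +
          matVec (Bh (n + 1) i) (Qv (n + 1)) α + matVec (Ch n i) (Qv n) α)) ↔
    -- … holds iff (RR1)–(RR3b) hold:
      ((∀ i : Fin d, Bh 0 i = B 0 i + Lmat d 0 i * M 0) ∧
       (∀ (n : ℕ) (i : Fin d),
         Bh (n + 1) i = B (n + 1) i - M n * Lmat d n i + Lmat d (n + 1) i * M (n + 1)) ∧
       (∀ i : Fin d,
         Ch 0 i = C 0 i - M 0 * Bh 0 i + B 1 i * M 0 + Lmat d 1 i * Nm 0) ∧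
       (∀ (n : ℕ) (i : Fin d),
         Ch (n + 1) i = C (n + 1) i - M (n + 1) * Bh (n + 1) i + B (n + 2) i * M (n + 1) -
           Nm n * Lmat d n i + Lmat d (n + 2) i * Nm (n + 1)) ∧
       (∀ (n : ℕ) (i : Fin d),
         M (n + 1) * Ch n i + Nm n * Bh n i = C (n + 1) i * M n + B (n + 2) i * Nm n) ∧
       (∀ (n : ℕ) (i : Fin d),
         C (n + 2) i * Nm n = Nm (n + 1) * Ch n i))) ∧
    -- in such a case, `{ℚ_n}` is a monic OPS for `v = λ(x)u` with `deg λ = 2`: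
    (((∀ (i : Fin d) (α : Idx d 0),
        X i * Qv 0 α = matVec (Lmat d 0 i) (Qv 1) α + matVec (Bh 0 i) (Qv 0) α) ∧
      (∀ (n : ℕ) (i : Fin d) (α : Idx d (n + 1)),
        X i * Qv (n + 1) α = matVec (Lmat d (n + 1) i) (Qv (n + 2)) α +
          matVec (Bh (n + 1) i) (Qv (n + 1)) α + matVec (Ch n i) (Qv n) α)) →
      ∃ (QS : PolySystem d) (v : MvPolynomial (Fin d) ℝ →ₗ[ℝ] ℝ),
        QS.vec = Qv ∧ QS.IsMonic ∧ IsOPS v QS ∧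
        (((∑ α : Idx d 2, ∑ β : Idx d 2,
              (Nm 0 α zeroIdx * (Hmat u P 2)⁻¹ α β) • P.vec 2 β) +
          (∑ α : Idx d 1, ∑ β : Idx d 1,
              (M 0 α zeroIdx * (Hmat u P 1)⁻¹ α β) • P.vec 1 β) +
          ((Hmat u P 0)⁻¹ zeroIdx zeroIdx) • P.vec 0 zeroIdx).totalDegree = 2) ∧
        (∀ p : MvPolynomial (Fin d) ℝ,
          v p = u ((((∑ α : Idx d 2, ∑ β : Idx d 2,
              (Nm 0 α zeroIdx * (Hmat u P 2)⁻¹ α β) • P.vec 2 β) +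
            (∑ α : Idx d 1, ∑ β : Idx d 1,
              (M 0 α zeroIdx * (Hmat u P 1)⁻¹ α β) • P.vec 1 β) +
            ((Hmat u P 0)⁻¹ zeroIdx zeroIdx) • P.vec 0 zeroIdx)) * p))) := by
  have hQ : IsPerturbedSeq P M Nm Qv := ⟨hQ0, funext hQ1, fun n => funext (hQrec n)⟩
  have hPrel : HasThreeTerm P.vec B C := (hasThreeTerm_iff_apply _ _ _).mpr ⟨h3term0, h3term⟩
  rw [← polyOfMoments_one_eq]
  set lam := polyOfMoments u P 1 (fun α => M 0 α zeroIdx) (fun α => Nm 0 α zeroIdx)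
  refine ⟨(hasThreeTerm_iff_apply Qv Bh Ch).symm.trans (hQ.hasThreeTerm_iff hPrel Bh Ch hPmonic),
    fun hrel => ?_⟩
  have hm₂ : (fun α => Nm 0 α zeroIdx) ≠ 0 := fun h =>
    hN2 (Matrix.ext fun α β => by rw [Unique.eq_default β]; exact congrFun h α)
  have hdeg : lam.totalDegree = 2 := totalDegree_polyOfMoments hP hPmonic hm₂
  have hlam0 : lam ≠ 0 := fun h => by simp [h] at hdeg
  refine ⟨PolySystem.ofMonic Qv (hQ.isMonicVec hPmonic), u.comp (LinearMap.mulLeft ℝ lam), rfl,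
    PolySystem.isMonic_ofMonic _, ?_, hdeg, fun p => rfl⟩
  exact isOPS_of_orthogonal _ _ (hQ.isMonicVec hPmonic)
    (fun n p hp β => map_mul_eq_zero_of_threeTerm _ (Lmat d) Bh Ch
      ((hasThreeTerm_iff_apply Qv Bh Ch).mpr hrel).succ (hQ.map_polyOfMoments_mul_succ hP hPmonic)
      hp β)
    (fun q hq => hP.eq_zero_of_forall_map_mulLeft hlam0 hq)

/-- Theorem 4.2.  Let `{ℙ_n}` be the monic OPS of a quasi-definite `u`,
with three term relations `x_iℙ_n = L_{n,i}ℙ_{n+1} + B_{n,i}ℙ_n + C_{n,i}ℙ_{n-1}`.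
Given matrices `M_n` (`n ≥ 1`), `N_n` (`n ≥ 2`) with `N_2 ≠ 0`, define recursively
`ℚ_0 = ℙ_0`, `ℚ_1 = ℙ_1 - M_1ℙ_0`, `ℚ_n = ℙ_n - M_nℚ_{n-1} - N_nℚ_{n-2}`.
Then `{ℚ_n}` satisfies three term relations with coefficients `B̂_{n,i}`, `Ĉ_{n,i}`
iff the compatibility equations (RR1)–(RR3b) hold; in that case `{ℚ_n}` is the monic OPS
of a quasi-definite moment functional `v = λ(x)u`, where
`λ(x) = N_2^tH_2⁻¹ℙ_2 + M_1^tH_1⁻¹ℙ_1 + H_0⁻¹ℙ_0` has exact total degree 2.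
(Indexing: `B n i = B_{n,i}`, `C n i = C_{n+1,i}`, `M n = M_{n+1}`, `Nm n = N_{n+2}`,
`Bh n i = B̂_{n,i}`, `Ch n i = Ĉ_{n+1,i}`.) -/
theorem christoffel_favard
    {d : ℕ} (hd : 1 ≤ d)
    (u : MvPolynomial (Fin d) ℝ →ₗ[ℝ] ℝ)
    (P : PolySystem d) (hP : IsOPS u P) (hPmonic : P.IsMonic)
    (B : (n : ℕ) → Fin d → Matrix (Idx d n) (Idx d n) ℝ)
    (C : (n : ℕ) → Fin d → Matrix (Idx d (n + 1)) (Idx d n) ℝ)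
    (h3term0 : ∀ (i : Fin d) (α : Idx d 0),
      X i * P.vec 0 α = matVec (Lmat d 0 i) (P.vec 1) α + matVec (B 0 i) (P.vec 0) α)
    (h3term : ∀ (n : ℕ) (i : Fin d) (α : Idx d (n + 1)),
      X i * P.vec (n + 1) α = matVec (Lmat d (n + 1) i) (P.vec (n + 2)) α +
        matVec (B (n + 1) i) (P.vec (n + 1)) α + matVec (C n i) (P.vec n) α)
    (M : (n : ℕ) → Matrix (Idx d (n + 1)) (Idx d n) ℝ)
    (Nm : (n : ℕ) → Matrix (Idx d (n + 2)) (Idx d n) ℝ) (hN2 : Nm 0 ≠ 0)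
    (Qv : (n : ℕ) → Idx d n → MvPolynomial (Fin d) ℝ)
    (hQ0 : Qv 0 = P.vec 0)
    (hQ1 : ∀ α : Idx d 1, Qv 1 α = P.vec 1 α - matVec (M 0) (Qv 0) α)
    (hQrec : ∀ (n : ℕ) (α : Idx d (n + 2)),
      Qv (n + 2) α = P.vec (n + 2) α - matVec (M (n + 1)) (Qv (n + 1)) α -
        matVec (Nm n) (Qv n) α)
    (Bh : (n : ℕ) → Fin d → Matrix (Idx d n) (Idx d n) ℝ)
    (Ch : (n : ℕ) → Fin d → Matrix (Idx d (n + 1)) (Idx d n) ℝ) :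
    -- the three term relation for `{ℚ_n}` …
    (((∀ (i : Fin d) (α : Idx d 0),
        X i * Qv 0 α = matVec (Lmat d 0 i) (Qv 1) α + matVec (Bh 0 i) (Qv 0) α) ∧
      (∀ (n : ℕ) (i : Fin d) (α : Idx d (n + 1)),
        X i * Qv (n + 1) α = matVec (Lmat d (n + 1) i) (Qv (n + 2)) α +
          matVec (Bh (n + 1) i) (Qv (n + 1)) α + matVec (Ch n i) (Qv n) α)) ↔
    -- … holds iff (RR1)–(RR3b) hold:
      ((∀ i : Fin d, Bh 0 i = B 0 i + Lmat d 0 i * M 0) ∧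
       (∀ (n : ℕ) (i : Fin d),
         Bh (n + 1) i = B (n + 1) i - M n * Lmat d n i + Lmat d (n + 1) i * M (n + 1)) ∧
       (∀ i : Fin d,
         Ch 0 i = C 0 i - M 0 * Bh 0 i + B 1 i * M 0 + Lmat d 1 i * Nm 0) ∧
       (∀ (n : ℕ) (i : Fin d),
         Ch (n + 1) i = C (n + 1) i - M (n + 1) * Bh (n + 1) i + B (n + 2) i * M (n + 1) -
           Nm n * Lmat d n i + Lmat d (n + 2) i * Nm (n + 1)) ∧
       (∀ (n : ℕ) (i : Fin d),
         M (n + 1) * Ch n i + Nm n * Bh n i = C (n + 1) i * M n + B (n + 2) i * Nm n) ∧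
       (∀ (n : ℕ) (i : Fin d),
         C (n + 2) i * Nm n = Nm (n + 1) * Ch n i))) ∧
    -- in such a case, `{ℚ_n}` is a monic OPS for `v = λ(x)u` with `deg λ = 2`:
    (((∀ (i : Fin d) (α : Idx d 0),
        X i * Qv 0 α = matVec (Lmat d 0 i) (Qv 1) α + matVec (Bh 0 i) (Qv 0) α) ∧
      (∀ (n : ℕ) (i : Fin d) (α : Idx d (n + 1)),
        X i * Qv (n + 1) α = matVec (Lmat d (n + 1) i) (Qv (n + 2)) α +
          matVec (Bh (n + 1) i) (Qv (n + 1)) α + matVec (Ch n i) (Qv n) α)) →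
      ∃ (QS : PolySystem d) (v : MvPolynomial (Fin d) ℝ →ₗ[ℝ] ℝ),
        QS.vec = Qv ∧ QS.IsMonic ∧ IsOPS v QS ∧
        (((∑ α : Idx d 2, ∑ β : Idx d 2,
              (Nm 0 α zeroIdx * (Hmat u P 2)⁻¹ α β) • P.vec 2 β) +
          (∑ α : Idx d 1, ∑ β : Idx d 1,
              (M 0 α zeroIdx * (Hmat u P 1)⁻¹ α β) • P.vec 1 β) +
          ((Hmat u P 0)⁻¹ zeroIdx zeroIdx) • P.vec 0 zeroIdx).totalDegree = 2) ∧
        (∀ p : MvPolynomial (Fin d) ℝ,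
          v p = u ((((∑ α : Idx d 2, ∑ β : Idx d 2,
              (Nm 0 α zeroIdx * (Hmat u P 2)⁻¹ α β) • P.vec 2 β) +
            (∑ α : Idx d 1, ∑ β : Idx d 1,
              (M 0 α zeroIdx * (Hmat u P 1)⁻¹ α β) • P.vec 1 β) +
            ((Hmat u P 0)⁻¹ zeroIdx zeroIdx) • P.vec 0 zeroIdx)) * p))) :=
  christoffel_favard_general u P hP hPmonic B C h3term0 h3term M Nm hN2 Qv hQ0 hQ1 hQrec Bh Ch
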